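/- Let R = ℂ[t^α | 0 < α ∈ ℝ] and let M = ℂ·1 ⊕ R be the unitalization of R, with R acting by multiplication (in the unital ring obtained by adjoining 1). Then the canonical map R ⊗_R M → M is injective with image R, hence not surjective; in particular M is not a smooth R-module. -/

import Mathlib

/-! In `R ⊗_R M` the class of `t^a ⊗ t^b` (with `t^b ∈ R ⊆ M`) depends only on `a + b`, because
`t^(a+d) ⊗ t^b ≡ t^a ⊗ t^(d+b)`; and since exponents can be halved, `t^a ⊗ 1 ≡ t^(a/2) ⊗ t^(a/2)`.
So `t^γ ↦ [t^(γ/2) ⊗ t^(γ/2)]` inverts the action map `R ⊗_R M → M` on its image `R`: the map is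
injective, but misses `1 ∈ M`. -/

open TensorProduct LinearMap

/-- The additive semigroup of positive real exponents. -/
abbrev PosReal := {x : ℝ // 0 < x}

/-- `R = ℂ[t^α | 0 < α ∈ ℝ]`. -/
abbrev Rpos := AddMonoidAlgebra ℂ PosReal

/-- `M = ℂ·1 ⊕ R`, the unitalization of `R`. -/
abbrev Munit := ℂ × Rpos

/-- The bar differential `R ⊗ R ⊗ M → R ⊗ M` for a module structure given by a
bilinear action map `act`. -/
noncomputable def barDM (act : Rpos →ₗ[ℂ] Munit →ₗ[ℂ] Munit) :
    (Rpos ⊗[ℂ] (Rpos ⊗[ℂ] Munit)) →ₗ[ℂ] Rpos ⊗[ℂ] Munit :=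
  (rTensor Munit (mul' ℂ Rpos)) ∘ₗ (TensorProduct.assoc ℂ Rpos Rpos Munit).symm.toLinearMap
    - lTensor Rpos (TensorProduct.lift act)

open AddMonoidAlgebra

noncomputable def PosReal.half (a : PosReal) : PosReal := ⟨a / 2, half_pos a.2⟩

lemma PosReal.half_add_half (a : PosReal) : a.half + a.half = a := Subtype.ext (add_halves a.1)

lemma Rpos.single_add_one (a b : PosReal) :
    (single (a + b) 1 : Rpos) = single a 1 * single b 1 := by
  rw [single_mul_single, mul_one]

lemma Submodule.injective_of_ker_comp_mkQ_le {R M N : Type*} [Ring R] [AddCommGroup M]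
    [Module R M] [AddCommGroup N] [Module R N] {p : Submodule R M} (f : M ⧸ p →ₗ[R] N)
    (h : ker (f ∘ₗ p.mkQ) ≤ p) : Function.Injective f := by
  rw [← ker_eq_bot, eq_bot_iff]
  intro z hz
  obtain ⟨y, rfl⟩ := p.mkQ_surjective z
  exact (Submodule.Quotient.mk_eq_zero p).2 (h hz)

namespace barDM

variable (act : Rpos →ₗ[ℂ] Munit →ₗ[ℂ] Munit)

lemma tmul_tmul (r r' : Rpos) (m : Munit) :
    barDM act (r ⊗ₜ (r' ⊗ₜ m)) = (r * r') ⊗ₜ m - r ⊗ₜ act r' m := by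
  simp [barDM]

lemma mkQ_mul_tmul (r r' : Rpos) (m : Munit) :
    (range (barDM act)).mkQ ((r * r') ⊗ₜ m) = (range (barDM act)).mkQ (r ⊗ₜ act r' m) :=
  (Submodule.Quotient.eq _).2 ⟨r ⊗ₜ (r' ⊗ₜ m), tmul_tmul act r r' m⟩

noncomputable def monoClass (a b : PosReal) : (Rpos ⊗[ℂ] Munit) ⧸ range (barDM act) :=
  (range (barDM act)).mkQ (single a 1 ⊗ₜ (0, single b 1))

noncomputable def ofRpos : Rpos →ₗ[ℂ] (Rpos ⊗[ℂ] Munit) ⧸ range (barDM act) :=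
  Finsupp.linearCombination ℂ (fun γ => monoClass act γ.half γ.half) ∘ₗ
    (coeffLinearEquiv ℂ).toLinearMap

lemma ofRpos_single (a : PosReal) : ofRpos act (single a 1) = monoClass act a.half a.half := by
  simp [ofRpos]

variable {act}
variable (hact : ∀ (r : Rpos) (c : ℂ) (s : Rpos), act r (c, s) = (0, c • r + r * s))
include hact

lemma monoClass_add_left (a d b : PosReal) :
    monoClass act (a + d) b = monoClass act a (d + b) := by
  rw [monoClass, Rpos.single_add_one, mkQ_mul_tmul, hact, zero_smul, zero_add,
    ← Rpos.single_add_one, monoClass]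

lemma monoClass_eq_of_add_eq {a b a' b' : PosReal} (h : a + b = a' + b') :
    monoClass act a b = monoClass act a' b' := by
  wlog hlt : a < a' generalizing a b a' b'
  · rcases (not_lt.1 hlt).lt_or_eq with hlt' | rfl
    · exact (this h.symm hlt').symm
    · rw [add_left_cancel h]
  obtain ⟨d, rfl⟩ : ∃ d : PosReal, a' = a + d :=
    ⟨⟨a'.1 - a.1, sub_pos.2 hlt⟩, Subtype.ext (add_sub_cancel _ _).symm⟩
  rw [monoClass_add_left hact, add_left_cancel (h.trans (add_assoc a d b'))]

lemma mkQ_single_tmul_unit (a : PosReal) :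
    (range (barDM act)).mkQ (single a 1 ⊗ₜ (1, 0)) = monoClass act a.half a.half := by
  conv_lhs => rw [← a.half_add_half]
  rw [Rpos.single_add_one, mkQ_mul_tmul, hact, one_smul, mul_zero, add_zero, monoClass]

lemma ofRpos_comp_snd_comp_lift :
    ofRpos act ∘ₗ snd ℂ ℂ Rpos ∘ₗ lift act = (range (barDM act)).mkQ := by
  ext a b <;> simp only [coe_comp, Function.comp_apply, lsingle_apply, coe_restrictScalars,
    AlgebraTensorModule.curry_apply, curry_apply, inl_apply, inr_apply, lift.tmul, snd_apply, hact,
    one_smul, zero_smul, mul_zero, add_zero, zero_add, ← Rpos.single_add_one, ofRpos_single]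
  · exact (mkQ_single_tmul_unit hact a).symm
  · exact monoClass_eq_of_add_eq hact (a + b).half_add_half

lemma ker_lift_le : ker (lift act) ≤ range (barDM act) := by
  intro y hy
  rw [← Submodule.Quotient.mk_eq_zero, ← Submodule.mkQ_apply, ← ofRpos_comp_snd_comp_lift hact]
  simp only [coe_comp, Function.comp_apply, mem_ker.1 hy, map_zero]

lemma range_lift : range (lift act) = (⊥ : Submodule ℂ ℂ).prod ⊤ := by
  refine le_antisymm ?_ ?_
  · have hfst : fst ℂ ℂ Rpos ∘ₗ lift act = 0 :=
      TensorProduct.ext' fun r ⟨c, s⟩ => by simp [hact]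
    rintro _ ⟨y, rfl⟩
    exact ⟨congr($hfst y), trivial⟩
  · rintro ⟨c, s⟩ ⟨hc, -⟩
    obtain rfl : c = 0 := hc
    exact ⟨s ⊗ₜ (1, 0), by simp [hact]⟩

end barDM

theorem unitalization_not_smooth (act : Rpos →ₗ[ℂ] Munit →ₗ[ℂ] Munit)
    (hact : ∀ (r : Rpos) (c : ℂ) (s : Rpos), act r (c, s) = (0, c • r + r * s)) :
    ∀ f : ((Rpos ⊗[ℂ] Munit) ⧸ LinearMap.range (barDM act)) →ₗ[ℂ] Munit,
      f ∘ₗ (LinearMap.range (barDM act)).mkQ = TensorProduct.lift act →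
      Function.Injective f ∧
      LinearMap.range f = (⊥ : Submodule ℂ ℂ).prod (⊤ : Submodule ℂ Rpos) ∧
      ¬ Function.Surjective f ∧ ¬ Function.Bijective f := by
  intro f hf
  have hinj : Function.Injective f :=
    Submodule.injective_of_ker_comp_mkQ_le f (hf ▸ barDM.ker_lift_le hact)
  have hrange : range f = (⊥ : Submodule ℂ ℂ).prod ⊤ := by
    rw [← range_comp_of_range_eq_top f (Submodule.range_mkQ _), hf, barDM.range_lift hact]
  have hnsurj : ¬ Function.Surjective f := by
    rw [← range_eq_top, hrange]
    intro htop
    have hunit : ((1 : ℂ), (0 : Rpos)) ∈ (⊥ : Submodule ℂ ℂ).prod ⊤ := htop ▸ trivial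
    exact one_ne_zero hunit.1
  exact ⟨hinj, hrange, hnsurj, fun hbij => hnsurj hbij.2⟩
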